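/- Let α = iθ with θ ∈ ℝ be a purely imaginary complex number and let f : ℝ → ℂ be Z-almost automorphic. If x : ℝ → ℂ is a bounded solution of x'(t) = α x(t) + f(t), i.e. a bounded continuous function satisfying x(t) = e^{iθt} x(0) + ∫₀ᵗ e^{iθ(t−s)} f(s) ds for all t ∈ ℝ, then x is almost automorphic. -/

import Mathlib

open MeasureTheory Filter Topology

/-- Bounded, piecewise continuous scalar function: continuous on ℝ ∖ ℤ with finite
one-sided limits at every integer. -/
def BddPCc (f : ℝ → ℂ) : Prop :=
  (∃ C : ℝ, ∀ t : ℝ, ‖f t‖ ≤ C) ∧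
  ContinuousOn f {t : ℝ | ∀ n : ℤ, t ≠ (n : ℝ)} ∧
  ∀ n : ℤ, (∃ L : ℂ, Tendsto f (𝓝[<] (n : ℝ)) (𝓝 L)) ∧
           (∃ R : ℂ, Tendsto f (𝓝[>] (n : ℝ)) (𝓝 R))

/-- `ℤ`-almost automorphic scalar functions. -/
def ZAlmostAutomorphicC (f : ℝ → ℂ) : Prop :=
  BddPCc f ∧
  ∀ s : ℕ → ℤ, ∃ (φ : ℕ → ℕ) (g : ℝ → ℂ), StrictMono φ ∧
    (∀ t : ℝ, Tendsto (fun n => f (t + (s (φ n) : ℝ))) atTop (𝓝 (g t))) ∧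
    (∀ t : ℝ, Tendsto (fun n => g (t - (s (φ n) : ℝ))) atTop (𝓝 (f t)))

/-- Almost automorphic scalar functions in the sense of Bochner. -/
def AlmostAutomorphicC (f : ℝ → ℂ) : Prop :=
  (∃ C : ℝ, ∀ t : ℝ, ‖f t‖ ≤ C) ∧ Continuous f ∧
  ∀ s : ℕ → ℝ, ∃ (φ : ℕ → ℕ) (g : ℝ → ℂ), StrictMono φ ∧
    (∀ t : ℝ, Tendsto (fun n => f (t + s (φ n))) atTop (𝓝 (g t))) ∧
    (∀ t : ℝ, Tendsto (fun n => g (t - s (φ n))) atTop (𝓝 (f t)))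

/-!
In the rotating frame `y(t) = e^{-iθt} x(t)` the equation becomes `y' = e^{-iθt} f(t)`, so `y` is a
bounded primitive of a function `h` that, like `f`, has Bochner limits along integer shifts; since
multiplying by the periodic factor `e^{iθt}` preserves almost automorphy, it suffices to show that
`y` is almost automorphic.

Along integer shifts `k_n` with `h(t + k_n) → H(t)` and `y(k_n) → c`, dominated convergence gives
`y(t + k_n) → Y(t) := c + ∫₀ᵗ H`, and, for a further subsequence, `Y(t - k_n) → y(t) + δ` for a
constant `δ`. Then the bounded set `y(ℝ)` satisfies `y(ℝ) + δ ⊆ closure y(ℝ)`, which forces `δ = 0`.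
Finally `y` is Lipschitz, so writing a real shift as `s_n = k_n + r_n` with `r_n ∈ [0, 1)`, the
fractional parts only translate the limit by `lim r_n`.
-/

open Set Bornology
open scoped NNReal

theorem eq_zero_of_forall_add_mem_closure {E : Type*} [NormedAddCommGroup E] [NormedSpace ℝ E]
    {S : Set E} {δ : E} (hS : IsBounded S) (hne : S.Nonempty)
    (h : ∀ z ∈ S, z + δ ∈ closure S) : δ = 0 := by
  have hstep : ∀ z ∈ closure S, z + δ ∈ closure S := fun z hz =>
    closure_minimal ((image_subset_iff (f := (· + δ)) (t := closure S)).2 h) isClosed_closure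
      (image_closure_subset_closure_image (continuous_add_const δ) (mem_image_of_mem _ hz))
  have hiter : ∀ n : ℕ, ∀ z ∈ closure S, z + n • δ ∈ closure S := by
    intro n
    induction n with
    | zero => simp
    | succ n ih => exact fun z hz => by rw [succ_nsmul, ← add_assoc]; exact hstep _ (ih z hz)
  obtain ⟨z, hz⟩ := hne
  obtain ⟨R, hR⟩ := hS.closure.exists_norm_le
  have hbound : ∀ n : ℕ, n * ‖δ‖ ≤ 2 * R := fun n =>
    calc (n : ℝ) * ‖δ‖ = ‖(z + n • δ) - z‖ := by
          rw [add_sub_cancel_left, RCLike.norm_nsmul ℝ, nsmul_eq_mul]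
      _ ≤ ‖z + n • δ‖ + ‖z‖ := norm_sub_le _ _
      _ ≤ 2 * R := by linarith [hR _ (hiter n z (subset_closure hz)), hR z (subset_closure hz)]
  by_contra hδ
  obtain ⟨n, hn⟩ := exists_nat_gt (2 * R / ‖δ‖)
  rw [div_lt_iff₀ (norm_pos_iff.2 hδ)] at hn
  linarith [hbound n]

theorem LipschitzWith.tendsto_of_tendsto_of_dist {α β ι : Type*} [PseudoMetricSpace α]
    [PseudoMetricSpace β] {f : α → β} {K : ℝ≥0} (hf : LipschitzWith K f) {l : Filter ι}
    {u v : ι → α} {b : β} (hu : Tendsto (fun n => f (u n)) l (𝓝 b))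
    (huv : Tendsto (fun n => dist (u n) (v n)) l (𝓝 0)) :
    Tendsto (fun n => f (v n)) l (𝓝 b) :=
  hu.congr_dist <| squeeze_zero (fun _ => dist_nonneg) (fun n => hf.dist_le_mul (u n) (v n))
    (by simpa using huv.const_mul (K : ℝ))

theorem intervalIntegrable_of_norm_le {E : Type*} [NormedAddCommGroup E] {h : ℝ → E} {M : ℝ}
    (hm : AEStronglyMeasurable h volume) (hb : ∀ t, ‖h t‖ ≤ M) (a b : ℝ) :
    IntervalIntegrable h volume a b :=
  intervalIntegrable_const.mono_fun' hm.restrict (ae_of_all _ hb)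

section Primitive

variable {E : Type*} [NormedAddCommGroup E] [NormedSpace ℝ E] {y h : ℝ → E} {M : ℝ}

theorem primitive_add_eq (hy : ∀ t, y t = y 0 + ∫ u in (0 : ℝ)..t, h u)
    (hint : ∀ a b, IntervalIntegrable h volume a b) (a t : ℝ) :
    y (t + a) = y a + ∫ u in (0 : ℝ)..t, h (u + a) := by
  rw [intervalIntegral.integral_comp_add_right, zero_add, hy (t + a), hy a, add_assoc,
    intervalIntegral.integral_add_adjacent_intervals (hint 0 a) (hint a (t + a))]

theorem lipschitzWith_of_primitive {K : ℝ≥0}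
    (hy : ∀ t, y t = y 0 + ∫ u in (0 : ℝ)..t, h u) (hm : AEStronglyMeasurable h volume)
    (hb : ∀ t, ‖h t‖ ≤ K) : LipschitzWith K y :=
  LipschitzWith.of_dist_le_mul fun a b => by
    have hab := primitive_add_eq hy (intervalIntegrable_of_norm_le hm hb) b (a - b)
    rw [sub_add_cancel] at hab
    rw [dist_eq_norm, Real.dist_eq, hab, add_sub_cancel_left]
    exact (intervalIntegral.norm_integral_le_of_norm_le_const fun u _ => hb (u + b)).trans_eq
      (by rw [sub_zero])

theorem tendsto_primitive_comp_add [CompleteSpace E]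
    (hy : ∀ t, y t = y 0 + ∫ u in (0 : ℝ)..t, h u) (hm : AEStronglyMeasurable h volume)
    (hb : ∀ t, ‖h t‖ ≤ M) {k : ℕ → ℝ} {c : E} {H : ℝ → E}
    (hc : Tendsto (fun n => y (k n)) atTop (𝓝 c))
    (hH : ∀ t, Tendsto (fun n => h (t + k n)) atTop (𝓝 (H t))) (t : ℝ) :
    Tendsto (fun n => y (t + k n)) atTop (𝓝 (c + ∫ u in (0 : ℝ)..t, H u)) := by
  simp only [primitive_add_eq hy (intervalIntegrable_of_norm_le hm hb)]
  refine hc.add (intervalIntegral.tendsto_integral_filter_of_dominated_convergence (fun _ => M)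
    (Eventually.of_forall fun n => ?_) (Eventually.of_forall fun n => ae_of_all _ fun u _ => hb _)
    intervalIntegrable_const (ae_of_all _ fun u _ => hH u))
  exact (hm.comp_measurePreserving (measurePreserving_add_right volume (k n))).restrict

end Primitive

def ShiftLimit {X : Type*} [TopologicalSpace X] (s : ℕ → ℝ) (f g : ℝ → X) : Prop :=
  (∀ t, Tendsto (fun n => f (t + s n)) atTop (𝓝 (g t))) ∧
    ∀ t, Tendsto (fun n => g (t - s n)) atTop (𝓝 (f t))

namespace ShiftLimit

variable {X : Type*} {s : ℕ → ℝ} {f g : ℝ → X}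

theorem comp_strictMono [TopologicalSpace X] (h : ShiftLimit s f g) {φ : ℕ → ℕ}
    (hφ : StrictMono φ) : ShiftLimit (s ∘ φ) f g :=
  ⟨fun t => (h.1 t).comp hφ.tendsto_atTop, fun t => (h.2 t).comp hφ.tendsto_atTop⟩

theorem mul [TopologicalSpace X] [Mul X] [ContinuousMul X] {f' g' : ℝ → X}
    (h : ShiftLimit s f g) (h' : ShiftLimit s f' g') : ShiftLimit s (f * f') (g * g') :=
  ⟨fun t => (h.1 t).mul (h'.1 t), fun t => (h.2 t).mul (h'.2 t)⟩

theorem lipschitzWith [PseudoMetricSpace X] {K : ℝ≥0} (h : ShiftLimit s f g)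
    (hf : LipschitzWith K f) : LipschitzWith K g :=
  LipschitzWith.of_dist_le_mul fun a b => le_of_tendsto ((h.1 a).dist (h.1 b)) <|
    Eventually.of_forall fun n => by
      simpa only [dist_add_right] using hf.dist_le_mul (a + s n) (b + s n)

theorem add_of_tendsto [PseudoMetricSpace X] {r : ℕ → ℝ} {ρ : ℝ} {K : ℝ≥0} (h : ShiftLimit s f g)
    (hf : LipschitzWith K f) (hr : Tendsto r atTop (𝓝 ρ)) :
    ShiftLimit (s + r) f fun t => g (t + ρ) := by
  have hdist : Tendsto (fun n => |r n - ρ|) atTop (𝓝 0) := by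
    simpa using (hr.sub_const ρ).abs
  refine ⟨fun t => hf.tendsto_of_tendsto_of_dist (h.1 (t + ρ)) (hdist.congr fun n => ?_),
    fun t => (h.lipschitzWith hf).tendsto_of_tendsto_of_dist (h.2 t) (hdist.congr fun n => ?_)⟩
  · rw [Real.dist_eq, abs_sub_comm]
    congr 1
    simp only [Pi.add_apply]
    ring
  · rw [Real.dist_eq]
    congr 1
    simp only [Pi.add_apply]
    ring

theorem exists_primitive {E : Type*} [NormedAddCommGroup E] [NormedSpace ℝ E] [ProperSpace E]
    {h H y : ℝ → E} {M : ℝ} (hkh : ShiftLimit s h H)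
    (hm : AEStronglyMeasurable h volume) (hb : ∀ t, ‖h t‖ ≤ M)
    (hy : ∀ t, y t = y 0 + ∫ u in (0 : ℝ)..t, h u) (hyb : IsBounded (range y)) :
    ∃ (φ : ℕ → ℕ) (Y : ℝ → E), StrictMono φ ∧ ShiftLimit (s ∘ φ) y Y := by
  obtain ⟨c, -, φ₁, hφ₁, hc⟩ := tendsto_subseq_of_bounded hyb fun n => mem_range_self (s n)
  have hHb : ∀ t, ‖H t‖ ≤ M := fun t =>
    le_of_tendsto (hkh.1 t).norm (Eventually.of_forall fun n => hb _)
  have hHm : AEStronglyMeasurable H volume := aestronglyMeasurable_of_tendsto_ae atTop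
    (fun n => hm.comp_measurePreserving (measurePreserving_add_right volume (s n)))
    (ae_of_all _ hkh.1)
  set Y : ℝ → E := fun t => c + ∫ u in (0 : ℝ)..t, H u
  have hY : ∀ t, Tendsto (fun n => y (t + s (φ₁ n))) atTop (𝓝 (Y t)) :=
    tendsto_primitive_comp_add hy hm hb hc fun t => (hkh.1 t).comp hφ₁.tendsto_atTop
  have hYy : closure (range Y) ⊆ closure (range y) := closure_minimal (range_subset_iff.2 fun t =>
    mem_closure_of_tendsto (hY t) (Eventually.of_forall fun n => mem_range_self _))
    isClosed_closure
  obtain ⟨d, -, φ₂, hφ₂, hd⟩ := tendsto_subseq_of_bounded (hyb.closure.subset hYy)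
    fun n => subset_closure (mem_range_self (-s (φ₁ n)))
  -- going back along `-s` integrates the original `h`, but starting from the unknown `d`
  have hback : ∀ t, Tendsto (fun n => Y (t - s (φ₁ (φ₂ n)))) atTop (𝓝 (y t + (d - y 0))) := by
    intro t
    have := tendsto_primitive_comp_add (y := Y) (fun t => by simp [Y]) hHm hHb hd
      (fun u => by
        simpa [sub_eq_add_neg, Function.comp_def] using (hkh.2 u).comp (hφ₁.comp hφ₂).tendsto_atTop)
      t
    rw [hy t]
    convert this using 2
    · simp [sub_eq_add_neg]
    · abel
  have hδ : d - y 0 = 0 := eq_zero_of_forall_add_mem_closure hyb (range_nonempty y)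
    (forall_mem_range.2 fun t => hYy (mem_closure_of_tendsto (hback t)
      (Eventually.of_forall fun n => mem_range_self _)))
  exact ⟨φ₁ ∘ φ₂, Y, hφ₁.comp hφ₂, fun t => (hY t).comp hφ₂.tendsto_atTop,
    fun t => by simpa [hδ] using hback t⟩

end ShiftLimit

/-- Asking for a further subsequence of every subsequence of `s`, not just of `s` itself, is what
makes this notion stable under products. -/
def AutomorphicAlong {X : Type*} [TopologicalSpace X] (f : ℝ → X) (s : ℕ → ℝ) : Prop :=
  ∀ ψ : ℕ → ℕ, StrictMono ψ →
    ∃ (φ : ℕ → ℕ) (g : ℝ → X), StrictMono φ ∧ ShiftLimit (s ∘ ψ ∘ φ) f g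

namespace AutomorphicAlong

variable {X : Type*} {s : ℕ → ℝ} {f g : ℝ → X}

theorem mul [TopologicalSpace X] [Mul X] [ContinuousMul X] (hf : AutomorphicAlong f s)
    (hg : AutomorphicAlong g s) : AutomorphicAlong (f * g) s := by
  intro ψ hψ
  obtain ⟨φ₁, F, hφ₁, hF⟩ := hf ψ hψ
  obtain ⟨φ₂, G, hφ₂, hG⟩ := hg (ψ ∘ φ₁) (hψ.comp hφ₁)
  exact ⟨φ₁ ∘ φ₂, F * G, hφ₁.comp hφ₂, (hF.comp_strictMono hφ₂).mul hG⟩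

theorem primitive {E : Type*} [NormedAddCommGroup E] [NormedSpace ℝ E] [ProperSpace E]
    {h y : ℝ → E} {M : ℝ} (hh : AutomorphicAlong h s)
    (hm : AEStronglyMeasurable h volume) (hb : ∀ t, ‖h t‖ ≤ M)
    (hy : ∀ t, y t = y 0 + ∫ u in (0 : ℝ)..t, h u) (hyb : IsBounded (range y)) :
    AutomorphicAlong y s := by
  intro ψ hψ
  obtain ⟨φ₁, H, hφ₁, hH⟩ := hh ψ hψ
  obtain ⟨φ₂, Y, hφ₂, hY⟩ := hH.exists_primitive hm hb hy hyb
  exact ⟨φ₁ ∘ φ₂, Y, hφ₁.comp hφ₂, hY⟩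

theorem add [PseudoMetricSpace X] {r : ℕ → ℝ} {K : ℝ≥0} (hf : AutomorphicAlong f s)
    (hL : LipschitzWith K f) (hr : IsBounded (range r)) : AutomorphicAlong f (s + r) := by
  intro ψ hψ
  obtain ⟨ρ, -, φ₁, hφ₁, hρ⟩ := tendsto_subseq_of_bounded hr fun n => mem_range_self (ψ n)
  obtain ⟨φ₂, g, hφ₂, hg⟩ := hf (ψ ∘ φ₁) (hψ.comp hφ₁)
  exact ⟨φ₁ ∘ φ₂, fun t => g (t + ρ), hφ₁.comp hφ₂,
    hg.add_of_tendsto hL (hρ.comp hφ₂.tendsto_atTop)⟩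

end AutomorphicAlong

theorem ZAlmostAutomorphicC.automorphicAlong {f : ℝ → ℂ} (hf : ZAlmostAutomorphicC f)
    (k : ℕ → ℤ) : AutomorphicAlong f fun n => (k n : ℝ) := fun ψ _ => by
  obtain ⟨φ, g, hφ, h⟩ := hf.2 (k ∘ ψ)
  exact ⟨φ, g, hφ, h⟩

theorem almostAutomorphicC_of_automorphicAlong {f : ℝ → ℂ} (hb : ∃ C, ∀ t, ‖f t‖ ≤ C)
    (hc : Continuous f) (h : ∀ s, AutomorphicAlong f s) : AlmostAutomorphicC f :=
  ⟨hb, hc, fun s => by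
    obtain ⟨φ, g, hφ, h⟩ := h s id strictMono_id
    exact ⟨φ, g, hφ, h⟩⟩

theorem BddPCc.aestronglyMeasurable {f : ℝ → ℂ} (hf : BddPCc f) :
    AEStronglyMeasurable f volume :=
  (hf.2.1.stronglyMeasurable_of_countable_compl <| (countable_range ((↑) : ℤ → ℝ)).mono
    fun t ht => by simpa [eq_comm] using ht).aestronglyMeasurable

noncomputable def phase (θ t : ℝ) : ℂ := Complex.exp (θ * t * Complex.I)

theorem norm_phase (θ t : ℝ) : ‖phase θ t‖ = 1 := by
  rw [phase, ← Complex.ofReal_mul, Complex.norm_exp_ofReal_mul_I]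

theorem phase_add (θ a b : ℝ) : phase θ (a + b) = phase θ a * phase θ b := by
  simp only [phase, ← Complex.exp_add]; push_cast; ring_nf

theorem phase_mul_phase_neg (θ t : ℝ) : phase θ t * phase (-θ) t = 1 := by
  simp [phase, ← Complex.exp_add]

theorem phase_neg (θ t : ℝ) : phase θ (-t) = (phase θ t)⁻¹ := by
  simp only [phase, ← Complex.exp_neg]; push_cast; ring_nf

theorem continuous_phase (θ : ℝ) : Continuous (phase θ) := by
  unfold phase; fun_prop

theorem shiftLimit_phase {θ : ℝ} {s : ℕ → ℝ} {l : ℂ}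
    (hl : Tendsto (fun n => phase θ (s n)) atTop (𝓝 l)) :
    ShiftLimit s (phase θ) fun t => phase θ t * l := by
  have hl0 : l ≠ 0 := by
    rintro rfl
    simpa [norm_phase] using hl.norm
  refine ⟨fun t => by simpa only [phase_add] using hl.const_mul (phase θ t), fun t => ?_⟩
  simpa [sub_eq_add_neg, phase_add, phase_neg, mul_assoc, hl0] using
    ((hl.inv₀ hl0).const_mul (phase θ t)).mul_const l

theorem automorphicAlong_phase (θ : ℝ) (s : ℕ → ℝ) : AutomorphicAlong (phase θ) s := by
  intro ψ _
  obtain ⟨l, -, φ, hφ, hl⟩ :=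
    tendsto_subseq_of_bounded (Metric.isBounded_sphere (x := 0) (r := 1)) fun n =>
      mem_sphere_zero_iff_norm.2 (norm_phase θ (s (ψ n)))
  exact ⟨φ, _, hφ, shiftLimit_phase hl⟩

theorem phase_neg_mul_solution_eq {θ : ℝ} {f x : ℝ → ℂ}
    (hx : ∀ t : ℝ, x t = Complex.exp ((θ : ℂ) * t * Complex.I) * x 0 +
      ∫ s in (0:ℝ)..t, Complex.exp ((θ : ℂ) * (t - s) * Complex.I) * f s) (t : ℝ) :
    (phase (-θ) * x) t = (phase (-θ) * x) 0 + ∫ u in (0 : ℝ)..t, (phase (-θ) * f) u := by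
  have hrot : ∀ s : ℝ, phase (-θ) t * Complex.exp (θ * (t - s) * Complex.I) = phase (-θ) s :=
    fun s => by simp only [phase, ← Complex.exp_add]; push_cast; ring_nf
  have hx0 : phase (-θ) t * Complex.exp (θ * t * Complex.I) = 1 := by simpa [phase] using hrot 0
  simp only [Pi.mul_apply]
  rw [hx t, mul_add, ← mul_assoc, hx0, one_mul, ← intervalIntegral.integral_const_mul]
  simp only [← mul_assoc, hrot]
  simp [phase]

/-- If `α = iθ` is purely imaginary, `f` is `ℤ`-almost automorphic and `x` is a bounded
(continuous) solution of `x' = α x + f`, i.e.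
`x(t) = e^{iθt} x(0) + ∫₀ᵗ e^{iθ(t-s)} f(s) ds`, then `x` is almost automorphic. -/
theorem bounded_solution_purely_imaginary_is_aa (θ : ℝ)
    (f : ℝ → ℂ) (hf : ZAlmostAutomorphicC f)
    (x : ℝ → ℂ) (hxb : ∃ C : ℝ, ∀ t : ℝ, ‖x t‖ ≤ C) (hxc : Continuous x)
    (hx : ∀ t : ℝ, x t = Complex.exp ((θ : ℂ) * t * Complex.I) * x 0 +
      ∫ s in (0:ℝ)..t, Complex.exp ((θ : ℂ) * (t - s) * Complex.I) * f s) :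
    AlmostAutomorphicC x := by
  obtain ⟨M, hM⟩ := hf.1.1
  obtain ⟨C, hC⟩ := hxb
  have hhb : ∀ t, ‖(phase (-θ) * f) t‖ ≤ M.toNNReal := fun t => by
    simpa [norm_phase] using (hM t).trans M.le_coe_toNNReal
  have hhm : AEStronglyMeasurable (phase (-θ) * f) volume :=
    (continuous_phase _).aestronglyMeasurable.mul hf.1.aestronglyMeasurable
  set y := phase (-θ) * x
  have hy := phase_neg_mul_solution_eq hx
  have hxy : x = phase θ * y := funext fun t => by simp [y, ← mul_assoc, phase_mul_phase_neg]
  have hyb : IsBounded (range y) := isBounded_iff_forall_norm_le.2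
    ⟨C, forall_mem_range.2 fun t => by simpa [y, norm_phase] using hC t⟩
  refine almostAutomorphicC_of_automorphicAlong ⟨C, hC⟩ hxc fun s => ?_
  have hs : s = (fun n => (⌊s n⌋ : ℝ)) + fun n => Int.fract (s n) :=
    funext fun n => (Int.floor_add_fract (s n)).symm
  rw [hxy, hs]
  exact (automorphicAlong_phase θ _).mul <|
    (((automorphicAlong_phase (-θ) _).mul (hf.automorphicAlong _)).primitive hhm hhb hy hyb).add
      (lipschitzWith_of_primitive hy hhm hhb) (Metric.isBounded_Icc 0 1 |>.subset <|
        range_subset_iff.2 fun n => ⟨Int.fract_nonneg _, (Int.fract_lt_one _).le⟩)
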